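/- arXiv:2402.11785 — 6 statements merged into one kernel-verified Lean document; each statement's English description precedes it below -/
import Mathlib

section
/- Let V : Fin m → Fin n → EuclideanSpace ℂ (Fin 2) be a pairwise orthogonal product family (all V p i ≠ 0, and for all p ≠ q there exists i with ⟪V p i, V q i⟫ = 0). Then V is extendible (there exists w : Fin n → EuclideanSpace ℂ (Fin 2) with all w i ≠ 0 such that for every row p some column i has ⟪w i, V p i⟫ = 0) if and only if there exist a subset S of the columns Fin n and vectors u i ≠ 0 for i ∈ S such that the number of rows p satisfying ⟪u i, V p i⟫ ≠ 0 for every i ∈ S is at most n − |S|. -/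
/-! Sufficiency of the criterion is a matching argument. Each row `p` with
`⟪u i, V p i⟫ ≠ 0` for all `i ∈ S` is assigned its own column outside `S`, which is
possible since there are at most `n - |S|` such rows; in that column we put a nonzero
vector orthogonal to `V p i`, which exists because `ℂ²` has dimension `2`. Conversely,
a nonzero product vector `w` orthogonal to every row is the criterion for `S = univ`,
with no surviving row. -/

open scoped InnerProductSpace

/-- A pairwise orthogonal product family of size `m` on `n` qubits. -/
def PairwiseOrthProdFamily {m n : ℕ}
    (V : Fin m → Fin n → EuclideanSpace ℂ (Fin 2)) : Prop :=
  (∀ p i, V p i ≠ 0) ∧ ∀ p q : Fin m, p ≠ q → ∃ i, ⟪V p i, V q i⟫_ℂ = 0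

/-- Extendibility: a nonzero product vector orthogonal to every row exists. -/
def Extendible {m n : ℕ}
    (V : Fin m → Fin n → EuclideanSpace ℂ (Fin 2)) : Prop :=
  ∃ w : Fin n → EuclideanSpace ℂ (Fin 2),
    (∀ i, w i ≠ 0) ∧ ∀ p, ∃ i, ⟪w i, V p i⟫_ℂ = 0

/-- An `n`-qubit unextendible product basis of size `m`. -/
def IsUPB {m n : ℕ}
    (V : Fin m → Fin n → EuclideanSpace ℂ (Fin 2)) : Prop :=
  PairwiseOrthProdFamily V ∧ m < 2 ^ n ∧ ¬ Extendible V

open Module Finset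

theorem exists_ne_zero_inner_eq_zero {𝕜 E : Type*} [RCLike 𝕜] [NormedAddCommGroup E]
    [InnerProductSpace 𝕜 E] (hE : 1 < finrank 𝕜 E) (v : E) :
    ∃ z : E, z ≠ 0 ∧ ⟪z, v⟫_𝕜 = 0 := by
  have : FiniteDimensional 𝕜 E := Module.finite_of_finrank_pos (by omega)
  have hspan : finrank 𝕜 (𝕜 ∙ v) ≤ 1 := by
    simpa using finrank_span_le_card (R := 𝕜) ({v} : Set E)
  have hperp : (𝕜 ∙ v)ᗮ ≠ ⊥ := by
    intro h
    have := (𝕜 ∙ v).finrank_add_finrank_orthogonal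
    rw [h, finrank_bot] at this
    omega
  obtain ⟨z, hz, hz0⟩ := Submodule.exists_mem_ne_zero_of_ne_bot hperp
  exact ⟨z, hz0,
    inner_eq_zero_symm.mp (Submodule.mem_orthogonal_singleton_iff_inner_right.mp hz)⟩

theorem Extendible.of_injective {m n : ℕ} {V : Fin m → Fin n → EuclideanSpace ℂ (Fin 2)}
    {S : Finset (Fin n)} {u : Fin n → EuclideanSpace ℂ (Fin 2)} (hu : ∀ i ∈ S, u i ≠ 0)
    (e : {p // ∀ i ∈ S, ⟪u i, V p i⟫_ℂ ≠ 0} → Fin n) (he : Function.Injective e)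
    (heS : ∀ p, e p ∉ S) : Extendible V := by
  choose orth horth_ne horth using
    exists_ne_zero_inner_eq_zero (𝕜 := ℂ) (E := EuclideanSpace ℂ (Fin 2)) (by simp)
  set w := Function.extend e (fun p => orth (V p (e p))) (fun i => if i ∈ S then u i else orth 0)
  have hw_of_mem : ∀ i ∈ S, w i = u i := fun i hi =>
    (Function.extend_apply' _ _ _ fun ⟨p, hp⟩ => heS p (hp ▸ hi)).trans (if_pos hi)
  refine ⟨w, fun i => ?_, fun p => ?_⟩
  · by_cases hi : ∃ p, e p = i
    · obtain ⟨p, rfl⟩ := hi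
      simpa [w, he.extend_apply] using horth_ne _
    · by_cases hiS : i ∈ S
      · simpa [hw_of_mem i hiS] using hu i hiS
      · simpa [w, Function.extend_apply' _ _ _ hi, hiS] using horth_ne 0
  · by_cases hp : ∀ i ∈ S, ⟪u i, V p i⟫_ℂ ≠ 0
    · exact ⟨e ⟨p, hp⟩, by simpa [w, he.extend_apply] using horth _⟩
    · push Not at hp
      obtain ⟨i, hiS, hi⟩ := hp
      exact ⟨i, by rwa [hw_of_mem i hiS]⟩

theorem extendible_iff_column_subset_general {m n : ℕ}
    (V : Fin m → Fin n → EuclideanSpace ℂ (Fin 2)) :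
    Extendible V ↔
      ∃ (S : Finset (Fin n)) (u : Fin n → EuclideanSpace ℂ (Fin 2)),
        (∀ i ∈ S, u i ≠ 0) ∧
        (Finset.univ.filter
          (fun p : Fin m => ∀ i ∈ S, ⟪u i, V p i⟫_ℂ ≠ 0)).card ≤ n - S.card := by
  constructor
  · rintro ⟨w, hw_ne, hw⟩
    exact ⟨univ, w, fun i _ => hw_ne i, by simpa [filter_eq_empty_iff] using hw⟩
  · rintro ⟨S, u, hu, hcard⟩
    have hle : Fintype.card {p // ∀ i ∈ S, ⟪u i, V p i⟫_ℂ ≠ 0} ≤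
        Fintype.card (Sᶜ : Finset (Fin n)) := by
      rwa [Fintype.card_subtype, Fintype.card_coe, card_compl, Fintype.card_fin]
    obtain ⟨f⟩ := Function.Embedding.nonempty_of_card_le hle
    exact Extendible.of_injective hu (fun p => f p) (Subtype.val_injective.comp f.injective)
      fun p => mem_compl.mp (f p).2

/-- extendibility criterion via a subset of columns. -/
theorem extendible_iff_column_subset {m n : ℕ}
    (V : Fin m → Fin n → EuclideanSpace ℂ (Fin 2))
    (hV : PairwiseOrthProdFamily V) :
    Extendible V ↔
      ∃ (S : Finset (Fin n)) (u : Fin n → EuclideanSpace ℂ (Fin 2)),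
        (∀ i ∈ S, u i ≠ 0) ∧
        (Finset.univ.filter
          (fun p : Fin m => ∀ i ∈ S, ⟪u i, V p i⟫_ℂ ≠ 0)).card ≤ n - S.card :=
  extendible_iff_column_subset_general V
end

section
/- There exists a 5-qubit unextendible product basis of size 8, i.e., a family V : Fin 8 → Fin 5 → EuclideanSpace ℂ (Fin 2) of nonzero entries such that any two rows are orthogonal as product vectors and no nonzero product vector is orthogonal to all eight rows. -/
open scoped InnerProductSpace

/-!
The eight directions `(1,0), (0,1), (1,1), (1,-1), (1,i), (1,-i), (1,2), (2,-1)` of `ℂ²` are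
pairwise non-parallel and come in four orthogonal pairs. Each row of the basis assigns one
direction to each qubit, and any two rows use the two members of one pair at some qubit, so
the rows are orthogonal. A nonzero qubit vector is orthogonal to at most one direction, so a
product vector orthogonal to a row must "hit" it at a qubit where it is orthogonal to the
row's direction. In the symbol table each direction occurs at most twice in the first two
columns and at most once in the other three, so a product vector hits at most
`2 + 2 + 1 + 1 + 1 = 7 < 8` rows.
-/

open Complex Finset

theorem eq_zero_of_inner_eq_zero_of_det_ne_zero {w a b : EuclideanSpace ℂ (Fin 2)}
    (ha : ⟪w, a⟫_ℂ = 0) (hb : ⟪w, b⟫_ℂ = 0) (hab : a 0 * b 1 - a 1 * b 0 ≠ 0) : w = 0 := by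
  simp only [PiLp.inner_apply, RCLike.inner_apply, Fin.sum_univ_two] at ha hb
  have h0 : (starRingEnd ℂ) (w 0) * (a 0 * b 1 - a 1 * b 0) = 0 := by
    linear_combination b 1 * ha - a 1 * hb
  have h1 : (starRingEnd ℂ) (w 1) * (a 0 * b 1 - a 1 * b 0) = 0 := by
    linear_combination a 0 * hb - b 0 * ha
  ext i
  fin_cases i
  · simpa [hab] using h0
  · simpa [hab] using h1

theorem ne_zero_of_det_ne_zero {a b : EuclideanSpace ℂ (Fin 2)}
    (hab : a 0 * b 1 - a 1 * b 0 ≠ 0) : a ≠ 0 := by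
  rintro rfl
  simp at hab

theorem not_extendible_of_forall_exists_ne {m n : ℕ} {S : Type*} [Nonempty S]
    (u : S → EuclideanSpace ℂ (Fin 2)) (σ : Fin m → Fin n → S)
    (hu : ∀ s t, s ≠ t → u s 0 * u t 1 - u s 1 * u t 0 ≠ 0)
    (hσ : ∀ f : Fin n → S, ∃ p, ∀ i, σ p i ≠ f i) :
    ¬ Extendible fun p i => u (σ p i) := by
  rintro ⟨w, hw, hwσ⟩
  have hunique : ∀ i, ∃ t, ∀ s, ⟪w i, u s⟫_ℂ = 0 → s = t := by
    intro i
    by_cases h : ∃ t, ⟪w i, u t⟫_ℂ = 0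
    · obtain ⟨t, ht⟩ := h
      exact ⟨t, fun s hs => by_contra fun hst =>
        hw i (eq_zero_of_inner_eq_zero_of_det_ne_zero hs ht (hu s t hst))⟩
    · exact ⟨Classical.arbitrary S, fun s hs => absurd ⟨s, hs⟩ h⟩
  choose f hf using hunique
  obtain ⟨p, hp⟩ := hσ f
  obtain ⟨i, hi⟩ := hwσ p
  exact hp i (hf i _ hi)

theorem exists_forall_ne_of_sum_lt {ι κ S : Type*} [Fintype ι] [Fintype κ] [DecidableEq S]
    (σ : ι → κ → S) (b : κ → ℕ) (hb : ∀ i x, #{p | σ p i = x} ≤ b i)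
    (hsum : ∑ i, b i < Fintype.card ι) (f : κ → S) : ∃ p, ∀ i, σ p i ≠ f i := by
  classical
  by_contra! hcover
  have hsub : (univ : Finset ι) ⊆ univ.biUnion fun i => {p | σ p i = f i} := fun p _ => by
    obtain ⟨i, hi⟩ := hcover p
    simpa using ⟨i, hi⟩
  have := calc Fintype.card ι
      _ ≤ ∑ i, #{p | σ p i = f i} := (card_le_card hsub).trans card_biUnion_le
      _ ≤ ∑ i, b i := sum_le_sum fun i _ => hb i (f i)
  omega

noncomputable def qubitDir : Fin 8 → EuclideanSpace ℂ (Fin 2) :=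
  ![!₂[1, 0], !₂[0, 1], !₂[1, 1], !₂[1, -1], !₂[1, I], !₂[1, -I], !₂[1, 2], !₂[2, -1]]

theorem qubitDir_det_ne_zero (s t : Fin 8) (hst : s ≠ t) :
    qubitDir s 0 * qubitDir t 1 - qubitDir s 1 * qubitDir t 0 ≠ 0 := by
  fin_cases s <;> fin_cases t <;> first
    | exact absurd rfl hst
    | norm_num [qubitDir, Complex.ext_iff]

theorem qubitDir_ne_zero (s : Fin 8) : qubitDir s ≠ 0 :=
  ne_zero_of_det_ne_zero (qubitDir_det_ne_zero s (s + 1) (by simp))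

theorem inner_qubitDir_eq_zero {s t : Fin 8} (hpair : s.val / 2 = t.val / 2) (hst : s ≠ t) :
    ⟪qubitDir s, qubitDir t⟫_ℂ = 0 := by
  fin_cases s <;> fin_cases t <;> first
    | exact absurd rfl hst
    | exact absurd hpair (by decide)
    | norm_num [qubitDir, PiLp.inner_apply, Fin.sum_univ_two, Complex.ext_iff]

def upbSymbol : Fin 8 → Fin 5 → Fin 8 :=
  ![![0, 0, 0, 0, 0], ![1, 2, 2, 2, 2], ![1, 3, 4, 4, 4], ![0, 1, 6, 6, 6],
    ![2, 1, 3, 5, 7], ![3, 3, 1, 7, 5], ![3, 2, 7, 1, 3], ![2, 0, 5, 3, 1]]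

theorem upbSymbol_exists_pair (p q : Fin 8) (hpq : p ≠ q) :
    ∃ i, (upbSymbol p i).val / 2 = (upbSymbol q i).val / 2 ∧ upbSymbol p i ≠ upbSymbol q i := by
  revert p q; decide

theorem card_upbSymbol_fiber_le (i : Fin 5) (x : Fin 8) :
    #{p | upbSymbol p i = x} ≤ ![2, 2, 1, 1, 1] i := by
  revert i x; decide

theorem upbSymbol_exists_forall_ne (f : Fin 5 → Fin 8) : ∃ p, ∀ i, upbSymbol p i ≠ f i :=
  exists_forall_ne_of_sum_lt upbSymbol _ card_upbSymbol_fiber_le (by decide) f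

/-- there exists a 5-qubit UPB of size 8. -/
theorem exists_upb_8_5 :
    ∃ V : Fin 8 → Fin 5 → EuclideanSpace ℂ (Fin 2), IsUPB V := by
  refine ⟨fun p i => qubitDir (upbSymbol p i), ⟨fun p i => qubitDir_ne_zero _, fun p q hpq => ?_⟩,
    by norm_num, not_extendible_of_forall_exists_ne qubitDir upbSymbol qubitDir_det_ne_zero
      upbSymbol_exists_forall_ne⟩
  obtain ⟨i, hpair, hne⟩ := upbSymbol_exists_pair p q hpq
  exact ⟨i, inner_qubitDir_eq_zero hpair hne⟩
end

section
/- There exists a 4-qubit unextendible product basis of size 10, i.e., a family V : Fin 10 → Fin 4 → EuclideanSpace ℂ (Fin 2) of nonzero entries such that any two rows are orthogonal as product vectors and no nonzero product vector is orthogonal to all ten rows. -/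
open scoped InnerProductSpace

/-!
Every factor of the basis is one of the six Pauli eigenstates `|0⟩, |1⟩, |+⟩, |−⟩, |+i⟩, |−i⟩`.
Two of them are orthogonal when they are the two states of one Pauli basis, so pairwise
orthogonality of the ten rows is a finite check. Any two distinct ones span `ℂ²`, so a nonzero
single-qubit vector is orthogonal to at most one of them. A product vector orthogonal to all rows
therefore singles out one state `c i` per qubit such that every row agrees with `c` somewhere;
another finite check shows that no `c : Fin 4 → Fin 6` meets all ten rows.
-/

theorem EuclideanSpace.eq_zero_of_inner_eq_zero_of_det_ne_zero {𝕜 ι : Type*} [RCLike 𝕜]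
    [Fintype ι] [DecidableEq ι] {u : ι → EuclideanSpace 𝕜 ι}
    (hu : (Matrix.of fun j => (u j).ofLp).det ≠ 0) {w : EuclideanSpace 𝕜 ι}
    (hw : ∀ j, ⟪w, u j⟫_𝕜 = 0) : w = 0 := by
  have : star w.ofLp = 0 := Matrix.eq_zero_of_mulVec_eq_zero hu (funext hw)
  simpa using this

section ProductPattern

variable {m n : ℕ} {α : Type*} (s : α → EuclideanSpace ℂ (Fin 2)) (M : Fin m → Fin n → α)

theorem pairwiseOrthProdFamily_of_pattern (o : α → α → Prop) (hs : ∀ a, s a ≠ 0)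
    (ho : ∀ a b, o a b → ⟪s a, s b⟫_ℂ = 0) (hM : ∀ p q, p ≠ q → ∃ i, o (M p i) (M q i)) :
    PairwiseOrthProdFamily fun p i => s (M p i) :=
  ⟨fun _ _ => hs _, fun p q hpq => (hM p q hpq).imp fun _ => ho _ _⟩

theorem not_extendible_of_pattern [Nonempty α]
    (hs : ∀ w, w ≠ 0 → {a | ⟪w, s a⟫_ℂ = 0}.Subsingleton)
    (hM : ∀ c : Fin n → α, ∃ p, ∀ i, M p i ≠ c i) :
    ¬ Extendible fun p i => s (M p i) := by
  rintro ⟨w, hw, hcover⟩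
  have hchoice : ∀ i, ∃ c, ∀ a, ⟪w i, s a⟫_ℂ = 0 → a = c := by
    intro i
    by_cases h : ∃ a, ⟪w i, s a⟫_ℂ = 0
    · obtain ⟨c, hc⟩ := h
      exact ⟨c, fun a ha => hs _ (hw i) ha hc⟩
    · exact ⟨Classical.arbitrary α, fun a ha => (h ⟨a, ha⟩).elim⟩
  choose c hc using hchoice
  obtain ⟨p, hp⟩ := hM c
  obtain ⟨i, hi⟩ := hcover p
  exact hp i (hc i _ hi)

end ProductPattern

/-- The eigenbases of the Pauli matrices `Z`, `X`, `Y`: states `2k` and `2k + 1` form the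
`k`-th basis. -/
noncomputable def pauliState : Fin 6 → EuclideanSpace ℂ (Fin 2) :=
  ![!₂[1, 0], !₂[0, 1], !₂[1, 1], !₂[1, -1], !₂[1, Complex.I], !₂[1, -Complex.I]]

def PauliPartner (a b : Fin 6) : Prop := a ≠ b ∧ a.val / 2 = b.val / 2

instance : DecidableRel PauliPartner := fun _ _ => inferInstanceAs (Decidable (_ ∧ _))

theorem pauliState_ne_zero (a : Fin 6) : pauliState a ≠ 0 := by
  fin_cases a <;> simp [pauliState, ← (WithLp.ofLp_injective 2).ne_iff]

theorem inner_pauliState_eq_zero {a b : Fin 6} (h : PauliPartner a b) :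
    ⟪pauliState a, pauliState b⟫_ℂ = 0 := by
  fin_cases a <;> fin_cases b <;>
    simp_all [PauliPartner, pauliState, PiLp.inner_apply, Fin.sum_univ_two]

theorem det_pauliState_ne_zero {a b : Fin 6} (h : a ≠ b) :
    (Matrix.of fun j => (![pauliState a, pauliState b] j).ofLp).det ≠ 0 := by
  fin_cases a <;> fin_cases b <;> 
    simp_all [pauliState, Matrix.det_fin_two, Complex.ext_iff] <;> norm_num

theorem subsingleton_setOf_inner_pauliState_eq_zero {w : EuclideanSpace ℂ (Fin 2)} (hw : w ≠ 0) :
    {a | ⟪w, pauliState a⟫_ℂ = 0}.Subsingleton := by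
  intro a ha b hb
  by_contra hab
  refine hw (EuclideanSpace.eq_zero_of_inner_eq_zero_of_det_ne_zero
    (det_pauliState_ne_zero hab) fun j => ?_)
  fin_cases j <;> assumption

def upbPattern : Fin 10 → Fin 4 → Fin 6 :=
  ![![1,4,1,2], ![1,2,0,1], ![4,3,2,3], ![0,5,1,2], ![0,2,0,5],
    ![1,2,0,0], ![1,2,1,3], ![5,3,0,5], ![1,5,1,2], ![0,4,3,4]]

theorem upbPattern_exists_pauliPartner :
    ∀ p q, p ≠ q → ∃ i, PauliPartner (upbPattern p i) (upbPattern q i) := by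
  decide

theorem upbPattern_not_covered (c : Fin 4 → Fin 6) : ∃ p, ∀ i, upbPattern p i ≠ c i := by
  have : ∀ c0 c1 c2 c3 : Fin 6, ∃ p, ∀ i, upbPattern p i ≠ ![c0, c1, c2, c3] i := by decide
  have hc : ![c 0, c 1, c 2, c 3] = c := by ext i; fin_cases i <;> rfl
  simpa only [hc] using this (c 0) (c 1) (c 2) (c 3)

/-- there exists a 4-qubit UPB of size 10. -/
theorem exists_upb_10_4 :
    ∃ V : Fin 10 → Fin 4 → EuclideanSpace ℂ (Fin 2), IsUPB V :=
  ⟨fun p i => pauliState (upbPattern p i),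
    pairwiseOrthProdFamily_of_pattern pauliState upbPattern
      PauliPartner pauliState_ne_zero (fun _ _ => inner_pauliState_eq_zero)
      upbPattern_exists_pauliPartner,
    by norm_num,
    not_extendible_of_pattern pauliState upbPattern
      (fun _ => subsingleton_setOf_inner_pauliState_eq_zero) upbPattern_not_covered⟩
end

section
/- There exists a 3-qubit unextendible product basis of size 4 (the Shifts UPB): a family V : Fin 4 → Fin 3 → EuclideanSpace ℂ (Fin 2) of nonzero entries such that any two rows are orthogonal as product vectors and no nonzero product vector is orthogonal to all four rows. -/
open scoped InnerProductSpace

/-!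
The Shifts UPB has rows |0,1,+⟩, |1,+,0⟩, |+,0,1⟩, |−,−,−⟩; distinct rows are orthogonal in some
qubit because ⟨0|1⟩ = ⟨+|−⟩ = 0. In each qubit the four rows carry the four states 0, 1, +, −,
any two of which are linearly independent. A product vector orthogonal to all four rows is
orthogonal to each of them in one of only three qubits, so by pigeonhole two rows share that qubit,
and there the product vector's factor is orthogonal to two independent vectors of ℂ², hence zero.
-/

open scoped ComplexConjugate

section Qubit

variable {𝕜 : Type*} [RCLike 𝕜]

def det₂ (a b : EuclideanSpace 𝕜 (Fin 2)) : 𝕜 := a 0 * b 1 - a 1 * b 0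

lemma inner_fin_two (w a : EuclideanSpace 𝕜 (Fin 2)) :
    ⟪w, a⟫_𝕜 = conj (w 0) * a 0 + conj (w 1) * a 1 := by
  simp [PiLp.inner_apply, Fin.sum_univ_two, mul_comm]

lemma eq_zero_of_inner_eq_zero_of_det₂_ne_zero {w a b : EuclideanSpace 𝕜 (Fin 2)}
    (hab : det₂ a b ≠ 0) (ha : ⟪w, a⟫_𝕜 = 0) (hb : ⟪w, b⟫_𝕜 = 0) : w = 0 := by
  rw [inner_fin_two] at ha hb
  have hw₀ : conj (w 0) * det₂ a b = 0 := by
    unfold det₂; linear_combination b 1 * ha - a 1 * hb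
  have hw₁ : conj (w 1) * det₂ a b = 0 := by
    unfold det₂; linear_combination a 0 * hb - b 0 * ha
  ext j
  fin_cases j
  · simpa [hab] using hw₀
  · simpa [hab] using hw₁

end Qubit

theorem not_extendible_of_det₂_ne_zero {m n : ℕ} {V : Fin m → Fin n → EuclideanSpace ℂ (Fin 2)}
    (hnm : n < m) (hV : ∀ i, Pairwise fun p q => det₂ (V p i) (V q i) ≠ 0) :
    ¬ Extendible V := by
  rintro ⟨w, hw, hperp⟩
  choose factor hfactor using hperp
  obtain ⟨p, q, hpq, hsame⟩ :=
    Fintype.exists_ne_map_eq_of_card_lt factor (by simpa using hnm)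
  have hp := hfactor p
  rw [hsame] at hp
  exact hw _ (eq_zero_of_inner_eq_zero_of_det₂_ne_zero (hV _ hpq) hp (hfactor q))

noncomputable def ket0 : EuclideanSpace ℂ (Fin 2) := !₂[1, 0]
noncomputable def ket1 : EuclideanSpace ℂ (Fin 2) := !₂[0, 1]
noncomputable def ketPlus : EuclideanSpace ℂ (Fin 2) := !₂[1, 1]
noncomputable def ketMinus : EuclideanSpace ℂ (Fin 2) := !₂[1, -1]

noncomputable def shifts : Fin 4 → Fin 3 → EuclideanSpace ℂ (Fin 2) :=
  ![![ket0, ket1, ketPlus], ![ket1, ketPlus, ket0], ![ketPlus, ket0, ket1],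
    ![ketMinus, ketMinus, ketMinus]]

lemma shifts_ne_zero (p : Fin 4) (i : Fin 3) : shifts p i ≠ 0 := by
  intro h
  have := congrArg (fun v : EuclideanSpace ℂ (Fin 2) => (v 0, v 1)) h
  fin_cases p <;> fin_cases i <;> simp [shifts, ket0, ket1, ketPlus, ketMinus] at this

lemma shifts_orthogonal : Pairwise fun p q => ∃ i, ⟪shifts p i, shifts q i⟫_ℂ = 0 := by
  intro p q
  fin_cases p <;> fin_cases q <;>
    simp [shifts, ket0, ket1, ketPlus, ketMinus, inner_fin_two, Fin.exists_fin_succ]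

lemma det₂_shifts_ne_zero (i : Fin 3) : Pairwise fun p q => det₂ (shifts p i) (shifts q i) ≠ 0 := by
  intro p q
  fin_cases i <;> fin_cases p <;> fin_cases q <;>
    norm_num [shifts, ket0, ket1, ketPlus, ketMinus, det₂]

/-- there exists a 3-qubit UPB of size 4. -/
theorem exists_upb_4_3 :
    ∃ V : Fin 4 → Fin 3 → EuclideanSpace ℂ (Fin 2), IsUPB V :=
  ⟨shifts, ⟨shifts_ne_zero, fun _ _ hpq => shifts_orthogonal hpq⟩, by norm_num,
    not_extendible_of_det₂_ne_zero (by norm_num) det₂_shifts_ne_zero⟩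
end

section
/- For every m with 5 ≤ m ≤ 7 there is no 3-qubit unextendible product basis of size m: every pairwise orthogonal product family V : Fin m → Fin 3 → EuclideanSpace ℂ (Fin 2) with 5 ≤ m ≤ 7 is extendible. -/
/-!
Read each qubit coordinate as a map sending a member of the family to its line in `ℂ²`;
orthogonality pairs a line with its orthogonal complement, a fixed-point-free involution of the
lines. If in every coordinate `i` one can pick a member `c i` so that each member lies on the line
of `V (c i) i` in some coordinate, the vector `w` with `w i` spanning the complement of that line
extends the family.

Otherwise every member has an orthogonal partner in every coordinate, and (as `m ≤ 7`) no
coordinate puts all members on a single line and its complement. The orthogonality graph of a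
coordinate is then a disjoint union of at least two complete bipartite graphs, each with at least
two vertices, so it has at most `1 + (m - 2)² / 4` edges. Any two members are orthogonal somewhere,
so the three coordinates together have at least `m (m - 1) / 2` edges. This rules out `m = 5`; for
`m = 6, 7` all inequalities are tight, which fixes the shape of every coordinate
(`K₁,₁ ⊔ K₂,₂`, resp. `K₁,₁ ⊔ K₂,₃`) and makes each pair orthogonal in exactly one coordinate.
From this a cover is read off after all.
-/

open scoped InnerProductSpace

theorem Fin.sum_univ_three_rotate {M : Type*} [AddCommMonoid M] (f : Fin 3 → M) (i : Fin 3) :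
    ∑ j, f j = f i + f (i + 1) + f (i + 2) := by
  rw [← Equiv.sum_comp (Equiv.addLeft i), Fin.sum_univ_three]
  simp

theorem eq_of_forall_le_of_card_mul_le_sum {ι : Type*} [Fintype ι] {f : ι → ℕ} {s : ℕ}
    (hle : ∀ i, f i ≤ s) (hsum : Fintype.card ι * s ≤ ∑ i, f i) (i : ι) : f i = s := by
  have : ∑ i, f i = ∑ _i : ι, s :=
    le_antisymm (Finset.sum_le_sum fun i _ => hle i) (by simpa using hsum)
  exact (Finset.sum_eq_sum_iff_of_le fun i _ => hle i).1 this i (Finset.mem_univ i)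

namespace QubitLines

open Finset Function

section Coordinate

variable {α L : Type*} [Fintype α] [DecidableEq L] {σ : L → L} {ℓ : α → L}

/- A qubit coordinate of a family indexed by `α` is modelled by `ℓ : α → L`, sending each member
to its line, together with the orthogonal complement `σ`, a fixed-point-free involution of `L`.
`block σ ℓ p` is the connected component of `p` in the orthogonality graph, which is complete
bipartite between the members on the line of `p` and those on its complement. -/

variable (σ ℓ) in
def deg (p : α) : ℕ := #{q | ℓ q = σ (ℓ p)}

variable (σ ℓ) in
def block (p : α) : Finset α := {q | ℓ q = ℓ p ∨ ℓ q = σ (ℓ p)}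

theorem mem_block {p q : α} : q ∈ block σ ℓ p ↔ ℓ q = ℓ p ∨ ℓ q = σ (ℓ p) := by
  simp [block]

theorem mem_block_self (p : α) : p ∈ block σ ℓ p := mem_block.2 (Or.inl rfl)

theorem one_le_deg {p : α} (h : ∃ q, ℓ q = σ (ℓ p)) : 1 ≤ deg σ ℓ p :=
  card_pos.2 (h.imp fun _ hq => mem_filter.2 ⟨mem_univ _, hq⟩)

theorem deg_eq_of_eq {p q : α} (h : ℓ q = ℓ p) : deg σ ℓ q = deg σ ℓ p := by
  simp only [deg, h]

theorem deg_eq_of_orth (hσ : Involutive σ) {p q : α} (h : ℓ q = σ (ℓ p)) :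
    deg σ ℓ q = #{r | ℓ r = ℓ p} := by
  simp only [deg, h, hσ (ℓ p)]

theorem block_eq_of_mem (hσ : Involutive σ) {p q : α} (h : q ∈ block σ ℓ p) :
    block σ ℓ q = block σ ℓ p := by
  ext r
  rcases mem_block.1 h with h | h <;> simp only [mem_block, h, hσ (ℓ p), or_comm]

variable [DecidableEq α]

theorem block_subset_compl_of_notMem (hσ : Involutive σ) {p q : α} (h : q ∉ block σ ℓ p) :
    block σ ℓ q ⊆ (block σ ℓ p)ᶜ := by
  intro r hr
  rw [mem_compl]
  intro hrp
  exact h (block_eq_of_mem hσ hrp ▸ block_eq_of_mem hσ hr ▸ mem_block_self q)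

theorem mem_block_of_card_lt (hσ : Involutive σ) {p q : α}
    (h : Fintype.card α < #(block σ ℓ p) + #(block σ ℓ q)) : q ∈ block σ ℓ p := by
  by_contra hq
  have := card_le_card (block_subset_compl_of_notMem hσ hq)
  rw [card_compl] at this
  have := card_le_univ (block σ ℓ p)
  omega

theorem card_block (hfix : ∀ x, σ x ≠ x) (p : α) :
    #(block σ ℓ p) = #{q | ℓ q = ℓ p} + deg σ ℓ p := by
  rw [block, filter_or, card_union_of_disjoint]
  · rfl
  · exact disjoint_filter.2 fun q _ h h' => hfix (ℓ p) (h'.symm.trans h)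

section Involution

variable (hσ : Involutive σ) (hfix : ∀ x, σ x ≠ x)
include hσ hfix

theorem sum_deg_block (p : α) :
    ∑ q ∈ block σ ℓ p, deg σ ℓ q = 2 * (#{q | ℓ q = ℓ p} * deg σ ℓ p) := by
  rw [block, filter_or, sum_union (disjoint_filter.2 fun q _ h h' => hfix (ℓ p) (h'.symm.trans h)),
    sum_congr rfl fun q hq => deg_eq_of_eq (mem_filter.1 hq).2,
    sum_congr rfl fun q hq => deg_eq_of_orth hσ (mem_filter.1 hq).2]
  simp only [sum_const, smul_eq_mul, deg]
  ring

theorem two_mul_sum_deg_le_sq (U : Finset α) (hU : ∀ p ∈ U, block σ ℓ p ⊆ U) :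
    2 * ∑ p ∈ U, deg σ ℓ p ≤ #U ^ 2 := by
  induction U using Finset.strongInduction with
  | H U ih =>
    obtain rfl | ⟨p, hp⟩ := U.eq_empty_or_nonempty
    · simp
    have hB : block σ ℓ p ⊆ U := hU p hp
    have hrest : 2 * ∑ q ∈ U \ block σ ℓ p, deg σ ℓ q ≤ #(U \ block σ ℓ p) ^ 2 := by
      refine ih _ (sdiff_ssubset hB ⟨p, mem_block_self p⟩) fun q hq r hr => ?_
      rw [mem_sdiff] at hq ⊢
      exact ⟨hU q hq.1 hr, mem_compl.1 (block_subset_compl_of_notMem hσ hq.2 hr)⟩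
    have hblock : 4 * (#{q | ℓ q = ℓ p} * deg σ ℓ p) ≤ #(block σ ℓ p) ^ 2 := by
      rw [card_block hfix]
      nlinarith [sq_nonneg ((#{q | ℓ q = ℓ p} : ℤ) - deg σ ℓ p)]
    rw [← sum_sdiff hB, sum_deg_block hσ hfix, ← card_sdiff_add_card_eq_card hB]
    nlinarith [Nat.zero_le (#(U \ block σ ℓ p) * #(block σ ℓ p))]

theorem two_mul_sum_deg_le (p : α) :
    2 * ∑ q, deg σ ℓ q ≤
      4 * (#{q | ℓ q = ℓ p} * deg σ ℓ p) + (Fintype.card α - #(block σ ℓ p)) ^ 2 := by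
  have hcompl := two_mul_sum_deg_le_sq hσ hfix (block σ ℓ p)ᶜ fun q hq =>
    block_subset_compl_of_notMem hσ (mem_compl.1 hq)
  rw [card_compl] at hcompl
  rw [← sum_add_sum_compl (block σ ℓ p), sum_deg_block hσ hfix]
  omega

variable (hnbr : ∀ p, ∃ q, ℓ q = σ (ℓ p)) (hsplit : ∀ p, ∃ q, q ∉ block σ ℓ p)
include hnbr hsplit

theorem card_fiber_deg_constraints (p : α) :
    1 ≤ #{q | ℓ q = ℓ p} ∧ 1 ≤ deg σ ℓ p ∧ #{q | ℓ q = ℓ p} + deg σ ℓ p + 2 ≤ Fintype.card α ∧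
      2 * ∑ q, deg σ ℓ q ≤ 4 * (#{q | ℓ q = ℓ p} * deg σ ℓ p) +
        (Fintype.card α - (#{q | ℓ q = ℓ p} + deg σ ℓ p)) ^ 2 := by
  have hfiber : ∀ r, 1 ≤ #{s | ℓ s = ℓ r} := fun r => card_pos.2 ⟨r, by simp⟩
  obtain ⟨q, hq⟩ := hsplit p
  have hdisj := card_le_card (block_subset_compl_of_notMem hσ hq)
  have hle := card_le_univ (block σ ℓ p)
  simp only [card_compl, card_block hfix] at hdisj hle
  refine ⟨hfiber p, one_le_deg (hnbr p), ?_, ?_⟩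
  · have := one_le_deg (hnbr q)
    have := hfiber q
    omega
  · rw [← card_block hfix]
    exact two_mul_sum_deg_le hσ hfix p

theorem two_mul_sum_deg_le_four_add_sq [Nonempty α] :
    2 * ∑ q, deg σ ℓ q ≤ 4 + (Fintype.card α - 2) ^ 2 := by
  obtain ⟨ha, hb, hab, hsum⟩ :=
    card_fiber_deg_constraints hσ hfix hnbr hsplit (Classical.arbitrary α)
  generalize #{q | ℓ q = ℓ (Classical.arbitrary α)} = a at *
  generalize deg σ ℓ (Classical.arbitrary α) = b at *
  have : 4 * (a * b) + (Fintype.card α - (a + b)) ^ 2 ≤ 4 + (Fintype.card α - 2) ^ 2 := by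
    zify [show a + b ≤ Fintype.card α by omega, show 2 ≤ Fintype.card α by omega]
    nlinarith [sq_nonneg ((a : ℤ) - b),
      mul_nonneg (by omega : (0 : ℤ) ≤ Fintype.card α - a - b - 2) (by omega : (0 : ℤ) ≤ a + b - 2)]
  omega

theorem card_fiber_deg_of_card_eq_six (h6 : Fintype.card α = 6) (h10 : ∑ q, deg σ ℓ q = 10)
    (p : α) :
    (#{q | ℓ q = ℓ p} = 1 ∧ deg σ ℓ p = 1) ∨ (#{q | ℓ q = ℓ p} = 2 ∧ deg σ ℓ p = 2) := by
  obtain ⟨ha, hb, hab, hsum⟩ := card_fiber_deg_constraints hσ hfix hnbr hsplit p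
  rw [h6, h10] at *
  generalize #{q | ℓ q = ℓ p} = a at *
  generalize deg σ ℓ p = b at *
  have : a ≤ 4 := by omega
  have : b ≤ 4 := by omega
  interval_cases a <;> interval_cases b <;> omega

theorem card_fiber_deg_of_card_eq_seven (h7 : Fintype.card α = 7) (h14 : ∑ q, deg σ ℓ q = 14)
    (p : α) :
    (#{q | ℓ q = ℓ p} = 1 ∧ deg σ ℓ p = 1) ∨ (#{q | ℓ q = ℓ p} = 3 ∧ deg σ ℓ p = 2) ∨
      (#{q | ℓ q = ℓ p} = 2 ∧ deg σ ℓ p = 3) := by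
  obtain ⟨ha, hb, hab, hsum⟩ := card_fiber_deg_constraints hσ hfix hnbr hsplit p
  rw [h7, h14] at *
  generalize #{q | ℓ q = ℓ p} = a at *
  generalize deg σ ℓ p = b at *
  have : a ≤ 4 := by omega
  have : b ≤ 4 := by omega
  interval_cases a <;> interval_cases b <;> omega

theorem orth_of_deg_eq_one_of_card_six (h6 : Fintype.card α = 6) (h10 : ∑ q, deg σ ℓ q = 10)
    {p q : α} (hpq : p ≠ q) (hp : deg σ ℓ p = 1) (hq : deg σ ℓ q = 1) : ℓ q = σ (ℓ p) := by
  have hclass := card_fiber_deg_of_card_eq_six hσ hfix hnbr hsplit h6 h10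
  by_contra hqp
  obtain ⟨p', hp'⟩ := hnbr p
  have hp'deg : deg σ ℓ p' = 1 := by
    rw [deg_eq_of_orth hσ hp']
    have := hclass p
    omega
  have hpp' : p ≠ p' := by
    rintro rfl
    exact hfix _ hp'.symm
  have hp'q : p' ≠ q := by
    rintro rfl
    exact hqp hp'
  have hT : ∑ r ∈ {p, p', q}, deg σ ℓ r = 3 := by
    rw [sum_insert (by simp [hpp', hpq]), sum_pair hp'q, hp, hp'deg, hq]
    rfl
  have hTc : ∑ r ∈ {p, p', q}ᶜ, deg σ ℓ r ≤ #({p, p', q} : Finset α)ᶜ * 2 :=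
    sum_le_card_nsmul _ _ _ fun r _ => by rcases hclass r with h | h <;> omega
  rw [card_compl, h6, card_insert_of_notMem (by simp [hpp', hpq]), card_pair hp'q] at hTc
  have := sum_add_sum_compl {p, p', q} (deg σ ℓ)
  omega

theorem eq_of_deg_eq_two_of_card_six (h6 : Fintype.card α = 6) (h10 : ∑ q, deg σ ℓ q = 10)
    {p q : α} (hp : deg σ ℓ p = 2) (hq : deg σ ℓ q = 2) (hqp : ℓ q ≠ σ (ℓ p)) : ℓ q = ℓ p := by
  have hclass := card_fiber_deg_of_card_eq_six hσ hfix hnbr hsplit h6 h10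
  have hmem : q ∈ block σ ℓ p := by
    refine mem_block_of_card_lt hσ ?_
    rw [card_block hfix, card_block hfix]
    rcases hclass p with hp' | hp' <;> rcases hclass q with hq' | hq' <;> omega
  exact (mem_block.1 hmem).resolve_right hqp

theorem eq_of_deg_eq_two_of_card_seven (h7 : Fintype.card α = 7) (h14 : ∑ q, deg σ ℓ q = 14)
    {p q : α} (hp : deg σ ℓ p = 2) (hq : deg σ ℓ q = 2) : ℓ q = ℓ p := by
  have hclass := card_fiber_deg_of_card_eq_seven hσ hfix hnbr hsplit h7 h14
  have hmem : q ∈ block σ ℓ p := by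
    refine mem_block_of_card_lt hσ ?_
    rw [card_block hfix, card_block hfix]
    rcases hclass p with hp' | hp' | hp' <;> rcases hclass q with hq' | hq' | hq' <;> omega
  refine (mem_block.1 hmem).resolve_right fun hqp => ?_
  have := deg_eq_of_orth hσ hqp
  rcases hclass p with hp' | hp' | hp' <;> omega

end Involution

end Coordinate

section Cover

variable {ι α L : Type*} {σ : L → L} {ℓ : ι → α → L}

variable (ℓ) in
def HasCover : Prop := ∃ c : ι → α, ∀ p, ∃ i, ℓ i p = ℓ i (c i)

theorem hasCover_of_forall_exists [Nonempty α] {P : ι → α → Prop} (hP : ∀ p, ∃ i, P i p)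
    (hpar : ∀ i p q, P i p → P i q → ℓ i q = ℓ i p) : HasCover ℓ := by
  have hc : ∀ i, ∃ c, ∀ p, P i p → ℓ i p = ℓ i c := fun i => by
    by_cases h : ∃ c, P i c
    · obtain ⟨c, hc⟩ := h
      exact ⟨c, fun p hp => hpar i c p hc hp⟩
    · exact ⟨Classical.arbitrary α, fun p hp => absurd ⟨p, hp⟩ h⟩
  choose c hc using hc
  exact ⟨c, fun p => (hP p).imp fun i => hc i p⟩

theorem exists_orth_of_not_hasCover [DecidableEq ι]
    (hpair : ∀ p q, p ≠ q → ∃ i, ℓ i q = σ (ℓ i p)) (hnc : ¬HasCover ℓ) (i : ι) (p : α) :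
    ∃ q, ℓ i q = σ (ℓ i p) := by
  by_contra! hno
  have hnbr : ∀ j, ∃ u, (∃ v, ℓ j v = σ (ℓ j p)) → ℓ j u = σ (ℓ j p) := fun j => by
    by_cases h : ∃ v, ℓ j v = σ (ℓ j p)
    · obtain ⟨v, hv⟩ := h
      exact ⟨v, fun _ => hv⟩
    · exact ⟨p, fun h' => absurd h' h⟩
  choose u hu using hnbr
  -- Any other member is orthogonal to `p` in some coordinate `j ≠ i`, so it lies on the line of
  -- `u j` there.
  refine hnc ⟨update u i p, fun q => ?_⟩
  obtain rfl | hpq := eq_or_ne p q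
  · exact ⟨i, by simp⟩
  obtain ⟨j, hj⟩ := hpair p q hpq
  have hji : j ≠ i := by
    rintro rfl
    exact hno q hj
  exact ⟨j, by rw [update_of_ne hji, hu j ⟨q, hj⟩, hj]⟩

end Cover

section Counting

variable {ι α L : Type*} [Fintype ι] [DecidableEq L] {σ : L → L} {ℓ : ι → α → L}

variable (σ ℓ) in
def orthCount (p q : α) : ℕ := #{i | ℓ i q = σ (ℓ i p)}

theorem orthCount_self (hfix : ∀ x, σ x ≠ x) (p : α) : orthCount σ ℓ p p = 0 :=
  card_eq_zero.2 <| filter_eq_empty_iff.2 fun _ _ h => hfix _ h.symm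

theorem one_le_orthCount (hpair : ∀ p q, p ≠ q → ∃ i, ℓ i q = σ (ℓ i p)) {p q : α}
    (hpq : p ≠ q) : 1 ≤ orthCount σ ℓ p q :=
  card_pos.2 <| (hpair p q hpq).imp fun i hi => mem_filter.2 ⟨mem_univ i, hi⟩

variable [Fintype α]

theorem sum_deg_eq_sum_orthCount (p : α) :
    ∑ i, deg σ (ℓ i) p = ∑ q, orthCount σ ℓ p q := by
  simp only [deg, orthCount, card_filter]
  exact sum_comm

variable [DecidableEq α] (hpair : ∀ p q, p ≠ q → ∃ i, ℓ i q = σ (ℓ i p))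
include hpair

theorem card_sub_one_le_sum_orthCount (p : α) :
    Fintype.card α - 1 ≤ ∑ q, orthCount σ ℓ p q :=
  calc Fintype.card α - 1 = ∑ q ∈ (univ : Finset α).erase p, 1 := by simp [card_erase_of_mem]
    _ ≤ ∑ q ∈ univ.erase p, orthCount σ ℓ p q :=
      sum_le_sum fun q hq => one_le_orthCount hpair (ne_of_mem_erase hq).symm
    _ ≤ ∑ q, orthCount σ ℓ p q := sum_le_sum_of_subset (subset_univ _)

theorem card_mul_card_sub_one_le_sum_deg :
    Fintype.card α * (Fintype.card α - 1) ≤ ∑ i, ∑ p, deg σ (ℓ i) p :=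
  calc Fintype.card α * (Fintype.card α - 1) = ∑ _p : α, (Fintype.card α - 1) := by
        rw [sum_const, card_univ, smul_eq_mul]
    _ ≤ ∑ p, ∑ i, deg σ (ℓ i) p := sum_le_sum fun p _ => by
        rw [sum_deg_eq_sum_orthCount]
        exact card_sub_one_le_sum_orthCount hpair p
    _ = ∑ i, ∑ p, deg σ (ℓ i) p := sum_comm

variable (htot : ∑ i, ∑ p, deg σ (ℓ i) p ≤ Fintype.card α * (Fintype.card α - 1))
include htot

theorem sum_orthCount_eq (p : α) : ∑ q, orthCount σ ℓ p q = Fintype.card α - 1 := by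
  have hle := card_sub_one_le_sum_orthCount hpair
  have htot' : ∑ p, ∑ q, orthCount σ ℓ p q ≤ ∑ _p : α, (Fintype.card α - 1) := by
    simpa [sum_comm (f := fun i p => deg σ (ℓ i) p), sum_deg_eq_sum_orthCount] using htot
  exact ((sum_eq_sum_iff_of_le fun p _ => hle p).1
    (le_antisymm (sum_le_sum fun p _ => hle p) htot') p (mem_univ p)).symm

theorem sum_deg_eq (p : α) : ∑ i, deg σ (ℓ i) p = Fintype.card α - 1 := by
  rw [sum_deg_eq_sum_orthCount, sum_orthCount_eq hpair htot]

theorem orthCount_eq_one (hfix : ∀ x, σ x ≠ x) {p q : α} (hpq : p ≠ q) :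
    orthCount σ ℓ p q = 1 := by
  have hsum : ∑ r ∈ univ.erase p, 1 = ∑ r ∈ univ.erase p, orthCount σ ℓ p r := by
    rw [sum_erase _ (orthCount_self hfix p), sum_orthCount_eq hpair htot]
    simp [card_erase_of_mem]
  exact ((sum_eq_sum_iff_of_le fun r hr => one_le_orthCount hpair (ne_of_mem_erase hr).symm).1
    hsum q (mem_erase.2 ⟨hpq.symm, mem_univ q⟩)).symm

end Counting

theorem exists_cover_of_card_le_three {α L : Type*} [DecidableEq α] [Nonempty α] {σ : L → L}
    (hσ : Involutive σ) (ℓ₁ ℓ₂ : α → L)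
    {B : Finset α} (hB : #B ≤ 3)
    (horth : (B : Set α).Pairwise fun p q => ℓ₁ q = σ (ℓ₁ p) ∨ ℓ₂ q = σ (ℓ₂ p)) :
    ∃ c₁ c₂, ∀ p ∈ B, ℓ₁ p = ℓ₁ c₁ ∨ ℓ₂ p = ℓ₂ c₂ := by
  interval_cases h : #B
  · exact ⟨Classical.arbitrary α, Classical.arbitrary α, by simp [card_eq_zero.1 h]⟩
  · obtain ⟨x, rfl⟩ := card_eq_one.1 h
    exact ⟨x, x, by simp⟩
  · obtain ⟨x, y, -, rfl⟩ := card_eq_two.1 h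
    exact ⟨x, y, by simp⟩
  · obtain ⟨x, y, z, hxy, hxz, hyz, rfl⟩ := card_eq_three.1 h
    have hxy' := horth (by simp) (by simp) hxy
    have hxz' := horth (by simp) (by simp) hxz
    have hyz' := horth (by simp) (by simp) hyz
    have hσ' : ∀ a, σ (σ a) = a := hσ
    simp only [mem_insert, mem_singleton, forall_eq_or_imp, forall_eq]
    -- Two of the three orthogonalities occur in the same coordinate, and there the two points
    -- orthogonal to a common third one are parallel.
    rcases hxy' with h₁ | h₁ <;> rcases hxz' with h₂ | h₂ <;> rcases hyz' with h₃ | h₃ <;>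
      first
      | exact ⟨x, y, by grind⟩ | exact ⟨y, x, by grind⟩
      | exact ⟨x, z, by grind⟩ | exact ⟨z, x, by grind⟩

section Fin3

variable {α L : Type*} [Fintype α] [DecidableEq α] [DecidableEq L] {σ : L → L}

variable {ℓ : Fin 3 → α → L} (hσ : Involutive σ) (hfix : ∀ x, σ x ≠ x)
  (hpair : ∀ p q, p ≠ q → ∃ i, ℓ i q = σ (ℓ i p))
include hσ hfix hpair

theorem hasCover_of_forall_mem_block {i : Fin 3} {p : α} (hall : ∀ q, q ∈ block σ (ℓ i) p)
    (hdeg : deg σ (ℓ i) p ≤ 3) : HasCover ℓ := by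
  have : Nonempty α := ⟨p⟩
  obtain ⟨c₁, c₂, hc⟩ := exists_cover_of_card_le_three hσ (ℓ (i + 1)) (ℓ (i + 2)) hdeg
    fun x hx y hy hxy => by
      obtain ⟨l, hl⟩ := hpair x y hxy
      replace hx := (mem_filter.1 (mem_coe.1 hx)).2
      replace hy := (mem_filter.1 (mem_coe.1 hy)).2
      have hli : l ≠ i := by
        rintro rfl
        rw [hx, hy] at hl
        exact hfix _ hl.symm
      obtain rfl | rfl : l = i + 1 ∨ l = i + 2 := by omega
      exacts [Or.inl hl, Or.inr hl]
  refine ⟨fun j => if j = i then p else if j = i + 1 then c₁ else c₂, fun q => ?_⟩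
  rcases mem_block.1 (hall q) with hq | hq
  · exact ⟨i, by simp [hq]⟩
  · rcases hc q (by simp [hq]) with h | h
    · exact ⟨i + 1, by simp [h]⟩
    · exact ⟨i + 2, by simp [h]⟩

variable (hnc : ¬HasCover ℓ)
include hnc

theorem exists_notMem_block_of_not_hasCover (h7 : Fintype.card α ≤ 7) (i : Fin 3) (p : α) :
    ∃ q, q ∉ block σ (ℓ i) p := by
  by_contra! hall
  have hcard := card_block (ℓ := ℓ i) hfix p
  rw [eq_univ_of_forall hall, card_univ] at hcard
  by_cases hdeg : deg σ (ℓ i) p ≤ 3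
  · exact hnc (hasCover_of_forall_mem_block hσ hfix hpair hall hdeg)
  obtain ⟨r, hr⟩ := exists_orth_of_not_hasCover hpair hnc i p
  refine hnc (hasCover_of_forall_mem_block hσ hfix hpair (p := r)
    (fun q => block_eq_of_mem hσ (hall r) ▸ hall q) ?_)
  rw [deg_eq_of_orth hσ hr]
  omega

theorem two_mul_sum_deg_le_of_not_hasCover [Nonempty α] (h7 : Fintype.card α ≤ 7) (i : Fin 3) :
    2 * ∑ p, deg σ (ℓ i) p ≤ 4 + (Fintype.card α - 2) ^ 2 :=
  two_mul_sum_deg_le_four_add_sq hσ hfix (exists_orth_of_not_hasCover hpair hnc i)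
    (exists_notMem_block_of_not_hasCover hσ hfix hpair hnc h7 i)

end Fin3

section Endgame

variable {α L : Type*} [Fintype α] [DecidableEq α] [DecidableEq L] {σ : L → L}
  {ℓ : Fin 3 → α → L} (hσ : Involutive σ) (hfix : ∀ x, σ x ≠ x)
  (hpair : ∀ p q, p ≠ q → ∃ i, ℓ i q = σ (ℓ i p))
include hσ hfix hpair

theorem hasCover_of_card_eq_five (h5 : Fintype.card α = 5) : HasCover ℓ := by
  by_contra hnc
  have : Nonempty α := Fintype.card_pos_iff.1 (by omega)
  have hb := two_mul_sum_deg_le_of_not_hasCover hσ hfix hpair hnc (by omega)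
  have htot := card_mul_card_sub_one_le_sum_deg hpair
  rw [Fin.sum_univ_three] at htot
  have := hb 0
  have := hb 1
  have := hb 2
  rw [h5] at *
  omega

theorem hasCover_of_card_eq_six (h6 : Fintype.card α = 6) : HasCover ℓ := by
  by_contra hnc
  have : Nonempty α := Fintype.card_pos_iff.1 (by omega)
  have hnbr := exists_orth_of_not_hasCover hpair hnc
  have hsplit := exists_notMem_block_of_not_hasCover hσ hfix hpair hnc (by omega)
  have hlower := card_mul_card_sub_one_le_sum_deg hpair
  have hb := two_mul_sum_deg_le_of_not_hasCover hσ hfix hpair hnc (by omega)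
  rw [h6] at hb hlower
  have h10 : ∀ i, ∑ p, deg σ (ℓ i) p = 10 :=
    eq_of_forall_le_of_card_mul_le_sum (fun i => by have := hb i; omega) (by simpa using hlower)
  have htot : ∑ i, ∑ p, deg σ (ℓ i) p ≤ Fintype.card α * (Fintype.card α - 1) := by
    simp [h10, h6]
  have hclass i := card_fiber_deg_of_card_eq_six hσ hfix (hnbr i) (hsplit i) h6 (h10 i)
  have hsum i p : deg σ (ℓ i) p + deg σ (ℓ (i + 1)) p + deg σ (ℓ (i + 2)) p = 5 := by
    rw [← Fin.sum_univ_three_rotate (fun j => deg σ (ℓ j) p), sum_deg_eq hpair htot, h6]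
  -- Each member has degree one in exactly one coordinate, and the degree-one members of
  -- coordinate `i + 1` are parallel in coordinate `i`.
  refine hnc (hasCover_of_forall_exists (P := fun i p => deg σ (ℓ (i + 1)) p = 1) (fun p => ?_)
    fun i p q hp hq => ?_)
  · have := sum_deg_eq hpair htot p
    rw [Fin.sum_univ_three, h6] at this
    have := hclass 0 p
    have := hclass 1 p
    have := hclass 2 p
    obtain h | h | h : deg σ (ℓ 0) p = 1 ∨ deg σ (ℓ 1) p = 1 ∨ deg σ (ℓ 2) p = 1 := by omega
    exacts [⟨2, h⟩, ⟨0, h⟩, ⟨1, h⟩]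
  obtain rfl | hpq := eq_or_ne p q
  · rfl
  have horth := orth_of_deg_eq_one_of_card_six hσ hfix (hnbr _) (hsplit _) h6 (h10 _) hpq hp hq
  have hdeg r (hr : deg σ (ℓ (i + 1)) r = 1) : deg σ (ℓ i) r = 2 := by
    have := hsum i r
    have := hclass i r
    have := hclass (i + 2) r
    omega
  refine eq_of_deg_eq_two_of_card_six hσ hfix (hnbr i) (hsplit i) h6 (h10 i) (hdeg p hp)
    (hdeg q hq) fun hi => ?_
  have := card_le_one.1 (orthCount_eq_one hpair htot hfix hpq).le (i + 1) (by simp [horth]) i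
    (by simp [hi])
  simp at this

theorem hasCover_of_card_eq_seven (h7 : Fintype.card α = 7) : HasCover ℓ := by
  by_contra hnc
  have : Nonempty α := Fintype.card_pos_iff.1 (by omega)
  have hnbr := exists_orth_of_not_hasCover hpair hnc
  have hsplit := exists_notMem_block_of_not_hasCover hσ hfix hpair hnc (by omega)
  have hlower := card_mul_card_sub_one_le_sum_deg hpair
  have hb := two_mul_sum_deg_le_of_not_hasCover hσ hfix hpair hnc (by omega)
  rw [h7] at hb hlower
  have h14 : ∀ i, ∑ p, deg σ (ℓ i) p = 14 :=
    eq_of_forall_le_of_card_mul_le_sum (fun i => by have := hb i; omega) (by simpa using hlower)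
  have htot : ∑ i, ∑ p, deg σ (ℓ i) p ≤ Fintype.card α * (Fintype.card α - 1) := by
    simp [h14, h7]
  have hclass i := card_fiber_deg_of_card_eq_seven hσ hfix (hnbr i) (hsplit i) h7 (h14 i)
  refine hnc (hasCover_of_forall_exists (P := fun i p => deg σ (ℓ i) p = 2) (fun p => ?_)
    fun i p q hp hq =>
      eq_of_deg_eq_two_of_card_seven hσ hfix (hnbr i) (hsplit i) h7 (h14 i) hp hq)
  -- Three degrees in `{1, 2, 3}` summing to `6` cannot all be odd.
  have hsum := sum_deg_eq hpair htot p
  rw [Fin.sum_univ_three, h7] at hsum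
  have := hclass 0 p
  have := hclass 1 p
  have := hclass 2 p
  obtain h | h | h : deg σ (ℓ 0) p = 2 ∨ deg σ (ℓ 1) p = 2 ∨ deg σ (ℓ 2) p = 2 := by omega
  exacts [⟨0, h⟩, ⟨1, h⟩, ⟨2, h⟩]

theorem hasCover_of_five_le_card_of_card_le_seven (h5 : 5 ≤ Fintype.card α)
    (h7 : Fintype.card α ≤ 7) : HasCover ℓ := by
  obtain h | h | h : Fintype.card α = 5 ∨ Fintype.card α = 6 ∨ Fintype.card α = 7 := by omega
  exacts [hasCover_of_card_eq_five hσ hfix hpair h, hasCover_of_card_eq_six hσ hfix hpair h,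
    hasCover_of_card_eq_seven hσ hfix hpair h]

end Endgame

end QubitLines

section Geometry

open Module

variable {𝕜 E : Type*} [RCLike 𝕜] [NormedAddCommGroup E] [InnerProductSpace 𝕜 E]

theorem Submodule.orthogonal_ne_self [Nontrivial E] (K : Submodule 𝕜 E) : Kᗮ ≠ K := by
  intro h
  have hbot : K = ⊥ := by simpa [h] using K.inf_orthogonal_eq_bot
  simp [hbot] at h

theorem Submodule.involutive_orthogonal [FiniteDimensional 𝕜 E] :
    Function.Involutive (Submodule.orthogonal : Submodule 𝕜 E → Submodule 𝕜 E) :=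
  fun K => K.orthogonal_orthogonal

variable [hE : Fact (finrank 𝕜 E = 2)]
include hE

theorem finrank_orthogonal_span_singleton_eq_one {u : E} (hu : u ≠ 0) :
    finrank 𝕜 (𝕜 ∙ u)ᗮ = 1 :=
  have : Fact (finrank 𝕜 E = 1 + 1) := hE
  Submodule.finrank_orthogonal_span_singleton hu

theorem span_singleton_eq_orthogonal_of_inner_eq_zero {u v : E} (hu : u ≠ 0) (hv : v ≠ 0)
    (huv : ⟪u, v⟫_𝕜 = 0) : 𝕜 ∙ v = (𝕜 ∙ u)ᗮ := by
  have : FiniteDimensional 𝕜 E := Module.finite_of_finrank_eq_succ hE.out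
  refine Submodule.eq_of_le_of_finrank_eq ?_ ?_
  · rwa [Submodule.span_singleton_le_iff_mem, Submodule.mem_orthogonal_singleton_iff_inner_right]
  · rw [finrank_span_singleton hv, finrank_orthogonal_span_singleton_eq_one hu]

theorem exists_ne_zero_mem_orthogonal_span_singleton {u : E} (hu : u ≠ 0) :
    ∃ w ∈ (𝕜 ∙ u)ᗮ, w ≠ 0 := by
  apply Submodule.exists_mem_ne_zero_of_ne_bot
  intro h
  have := finrank_orthogonal_span_singleton_eq_one (𝕜 := 𝕜) hu
  rw [h, finrank_bot] at this
  exact zero_ne_one this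

end Geometry

/-- there is no 3-qubit UPB of size `m` for `5 ≤ m ≤ 7`. -/
theorem no_three_qubit_upb_of_size_between (m : ℕ) (hm₁ : 5 ≤ m) (hm₂ : m ≤ 7)
    (V : Fin m → Fin 3 → EuclideanSpace ℂ (Fin 2))
    (hV : PairwiseOrthProdFamily V) :
    Extendible V := by
  classical
  obtain ⟨hV0, hVorth⟩ := hV
  have : Fact (Module.finrank ℂ (EuclideanSpace ℂ (Fin 2)) = 2) := ⟨by simp⟩
  obtain ⟨c, hc⟩ := QubitLines.hasCover_of_five_le_card_of_card_le_seven
    (ℓ := fun i p => ℂ ∙ V p i) Submodule.involutive_orthogonal Submodule.orthogonal_ne_self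
    (fun p q hpq => (hVorth p q hpq).imp fun i =>
      span_singleton_eq_orthogonal_of_inner_eq_zero (hV0 p i) (hV0 q i))
    (by simpa using hm₁) (by simpa using hm₂)
  choose w hw hw0 using fun i =>
    exists_ne_zero_mem_orthogonal_span_singleton (𝕜 := ℂ) (hV0 (c i) i)
  refine ⟨w, hw0, fun p => (hc p).imp fun i (hi : ℂ ∙ V p i = ℂ ∙ V (c i) i) => ?_⟩
  exact Submodule.inner_left_of_mem_orthogonal (hi ▸ Submodule.mem_span_singleton_self _) (hw i)
end

section
/- For every odd n ≥ 3, there is no n-qubit unextendible product basis of size n + 2: every pairwise orthogonal product family of size n + 2 on n qubits (n odd) is extendible. -/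
open scoped InnerProductSpace

/-!
At each qubit the local vectors fall into parallel classes, and orthogonality matches a class
with at most one other class. Non-extendibility says that no choice of one class per qubit covers
all `n + 2` vectors; choosing classes on a set `T` of qubits and spending the other qubits on the
uncovered vectors one at a time shows that the chosen classes cover at most `#T + 1` vectors.
Hence classes have at most two elements, two-element classes at different qubits meet, and every
vector has an orthogonal partner at every qubit. So the local orthogonality degrees are `1` or `2`,
and since `n + 2` is odd, the handshake lemma makes the number of degree-`2` vectors at each qubit
odd; the intersection property forces it to be exactly one. The degrees then sum to at most
`n * (n + 3)`, while pairwise orthogonality needs `(n + 2) * (n + 1)`.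
-/

open Finset Module Submodule

section TwoDimensional

variable {𝕜 E : Type*} [RCLike 𝕜] [NormedAddCommGroup E] [InnerProductSpace 𝕜 E]

theorem inner_eq_zero_of_span_singleton_eq {u v w : E} (h : 𝕜 ∙ v = 𝕜 ∙ w)
    (huv : ⟪u, v⟫_𝕜 = 0) : ⟪u, w⟫_𝕜 = 0 := by
  rw [← mem_orthogonal_singleton_iff_inner_right, ← span_singleton_le_iff_mem, ← h,
    span_singleton_le_iff_mem, mem_orthogonal_singleton_iff_inner_right]
  exact huv

variable [FiniteDimensional 𝕜 E]

theorem exists_ne_zero_inner_eq_zero_s13 (hE : 2 ≤ finrank 𝕜 E) {u : E} (hu : u ≠ 0) :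
    ∃ w ≠ 0, ⟪w, u⟫_𝕜 = 0 := by
  have : Fact (finrank 𝕜 E = (finrank 𝕜 E - 1) + 1) := ⟨by omega⟩
  have hK : (𝕜 ∙ u)ᗮ ≠ ⊥ := by
    rw [Ne, ← Submodule.finrank_eq_zero,
      finrank_orthogonal_span_singleton (n := finrank 𝕜 E - 1) hu]
    omega
  obtain ⟨w, hw, hw0⟩ := exists_mem_ne_zero_of_ne_bot hK
  exact ⟨w, hw0, inner_eq_zero_symm.1 (mem_orthogonal_singleton_iff_inner_right.1 hw)⟩

theorem span_singleton_eq_of_inner_eq_zero (hE : finrank 𝕜 E = 2) {u v w : E} (hu : u ≠ 0)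
    (hv : v ≠ 0) (hw : w ≠ 0) (huv : ⟪u, v⟫_𝕜 = 0) (huw : ⟪u, w⟫_𝕜 = 0) : 𝕜 ∙ v = 𝕜 ∙ w := by
  have : Fact (finrank 𝕜 E = 1 + 1) := ⟨hE⟩
  have key : ∀ x : E, x ≠ 0 → ⟪u, x⟫_𝕜 = 0 → 𝕜 ∙ x = (𝕜 ∙ u)ᗮ := fun x hx hux =>
    eq_of_le_of_finrank_eq
      ((span_singleton_le_iff_mem _ _).2 (mem_orthogonal_singleton_iff_inner_right.2 hux))
      (by rw [finrank_span_singleton hx, finrank_orthogonal_span_singleton (n := 1) hu])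
  rw [key v hv huv, key w hw huw]

end TwoDimensional

/-- The combinatorics of a non-extendible orthogonal family of `m` product vectors on `n` qubits:
`par i p q` and `(orth i).Adj p q` say that the `i`-th factors of `p` and `q` are parallel,
respectively orthogonal. `not_covered f` is non-extendibility tested on the product vector whose
`i`-th factor is orthogonal to the `i`-th factor of `f i`. -/
structure UnextendibleConfig (n m : ℕ) where
  par : Fin n → Fin m → Fin m → Prop
  par_equiv (i : Fin n) : Equivalence (par i)
  orth : Fin n → SimpleGraph (Fin m)
  orth_of_orth_of_par {i : Fin n} {p q q' : Fin m} : (orth i).Adj p q → par i q q' →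
    (orth i).Adj p q'
  par_of_orth_of_orth {i : Fin n} {p q q' : Fin m} : (orth i).Adj p q → (orth i).Adj p q' →
    par i q q'
  exists_orth {p q : Fin m} : p ≠ q → ∃ i, (orth i).Adj p q
  not_covered (f : Fin n → Fin m) : ∃ p, ∀ i, ¬ par i (f i) p

namespace UnextendibleConfig

open scoped Classical

section General

variable {n m : ℕ} (S : UnextendibleConfig n m) {i : Fin n} {p q : Fin m}

noncomputable def parClass (i : Fin n) (p : Fin m) : Finset (Fin m) := {q | S.par i p q}

noncomputable def degreeTwo (i : Fin n) : Finset (Fin m) := {p | (S.orth i).degree p = 2}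

variable {S}

@[simp]
theorem mem_parClass : q ∈ S.parClass i p ↔ S.par i p q := by
  simp [parClass]

@[simp]
theorem mem_degreeTwo : p ∈ S.degreeTwo i ↔ (S.orth i).degree p = 2 := by
  simp [degreeTwo]

theorem parClass_eq_of_par (h : S.par i p q) : S.parClass i p = S.parClass i q := by
  ext r
  simp only [mem_parClass]
  exact ⟨(S.par_equiv i).trans ((S.par_equiv i).symm h), (S.par_equiv i).trans h⟩

theorem neighborFinset_eq_parClass (h : (S.orth i).Adj p q) :
    (S.orth i).neighborFinset p = S.parClass i q := by
  ext r
  simp only [SimpleGraph.mem_neighborFinset, mem_parClass]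
  exact ⟨S.par_of_orth_of_orth h, S.orth_of_orth_of_par h⟩

theorem degree_eq_card_parClass (h : (S.orth i).Adj p q) :
    (S.orth i).degree p = #(S.parClass i q) := by
  rw [← SimpleGraph.card_neighborFinset_eq_degree, neighborFinset_eq_parClass h]

variable (S)

theorem card_biUnion_parClass_add_card_compl_lt (T : Finset (Fin n)) (g : Fin n → Fin m) :
    #(T.biUnion fun i => S.parClass i (g i)) + #Tᶜ < m := by
  set U := T.biUnion fun i => S.parClass i (g i)
  by_contra! h
  have hcard : Fintype.card ↥Uᶜ ≤ Fintype.card ↥Tᶜ := by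
    rw [Fintype.card_coe, Fintype.card_coe, card_compl U, Fintype.card_fin]
    omega
  obtain ⟨e⟩ := Function.Embedding.nonempty_of_card_le hcard
  have he : Function.Injective fun x : ↥Uᶜ => (e x : Fin n) :=
    Subtype.val_injective.comp e.injective
  -- qubits outside `T` take care of the vectors missed by the classes on `T`
  obtain ⟨p, hp⟩ := S.not_covered (Function.extend (fun x : ↥Uᶜ => (e x : Fin n)) Subtype.val g)
  by_cases hpU : p ∈ U
  · obtain ⟨i, hiT, hpi⟩ := mem_biUnion.1 hpU
    apply hp i
    rw [Function.extend_apply' _ _ _ fun ⟨x, hx⟩ => mem_compl.1 (e x).2 (hx ▸ hiT)]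
    exact mem_parClass.1 hpi
  · apply hp (e ⟨p, mem_compl.2 hpU⟩)
    rw [he.extend_apply]
    exact (S.par_equiv _).refl p

theorem exists_adj (i : Fin n) (p : Fin m) : ∃ q, (S.orth i).Adj p q := by
  by_contra! hp
  have hsub : ∀ k, ∃ q, (S.orth k).neighborFinset p ⊆ S.parClass k q := fun k => by
    rcases ((S.orth k).neighborFinset p).eq_empty_or_nonempty with h | ⟨q, hq⟩
    · exact ⟨p, h ▸ empty_subset _⟩
    · exact ⟨q, (neighborFinset_eq_parClass (by simpa using hq)).le⟩
  choose g hg using hsub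
  have hcover : univ.biUnion (fun k => S.parClass k (Function.update g i p k)) = univ := by
    refine eq_univ_of_forall fun r => mem_biUnion.2 ?_
    obtain rfl | hr := eq_or_ne r p
    · exact ⟨i, mem_univ _, by simpa using (S.par_equiv i).refl r⟩
    obtain ⟨k, hk⟩ := S.exists_orth hr.symm
    have hki : k ≠ i := by rintro rfl; exact hp r hk
    exact ⟨k, mem_univ _, by simpa [hki] using hg k (by simpa using hk)⟩
  have := S.card_biUnion_parClass_add_card_compl_lt univ (Function.update g i p)
  simp [hcover] at this

theorem degree_pos (i : Fin n) (p : Fin m) : 0 < (S.orth i).degree p :=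
  (S.orth i).degree_pos_iff_exists_adj p |>.2 (S.exists_adj i p)

theorem sub_one_le_sum_degree (p : Fin m) : m - 1 ≤ ∑ i, (S.orth i).degree p := by
  calc m - 1 = #(univ.erase p) := by simp
    _ ≤ #(univ.biUnion fun i => (S.orth i).neighborFinset p) := card_le_card fun q hq => by
        obtain ⟨i, hi⟩ := S.exists_orth (ne_of_mem_erase hq).symm
        exact mem_biUnion.2 ⟨i, mem_univ _, by simpa using hi⟩
    _ ≤ ∑ i, #((S.orth i).neighborFinset p) := card_biUnion_le
    _ = ∑ i, (S.orth i).degree p := by simp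

end General

section SizeAddTwo

variable {n : ℕ} {S : UnextendibleConfig n (n + 2)} {i j : Fin n} {p q b b' : Fin (n + 2)}

theorem card_parClass_le_two : #(S.parClass i p) ≤ 2 := by
  have := S.card_biUnion_parClass_add_card_compl_lt {i} fun _ => p
  simp only [singleton_biUnion, card_compl, card_singleton, Fintype.card_fin] at this
  omega

theorem parClass_inter_nonempty (hij : i ≠ j) (hp : #(S.parClass i p) = 2)
    (hq : #(S.parClass j q) = 2) : (S.parClass i p ∩ S.parClass j q).Nonempty := by
  have := S.card_biUnion_parClass_add_card_compl_lt {i, j} (Function.update (fun _ => q) i p)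
  simp only [biUnion_insert, singleton_biUnion, Function.update_self,
    Function.update_of_ne hij.symm, card_compl, card_pair hij, Fintype.card_fin] at this
  have := card_union_add_card_inter (S.parClass i p) (S.parClass j q)
  rw [← card_pos]
  omega

variable (S)

theorem degree_le_two (i : Fin n) (p : Fin (n + 2)) : (S.orth i).degree p ≤ 2 := by
  obtain ⟨q, hq⟩ := S.exists_adj i p
  exact degree_eq_card_parClass hq ▸ card_parClass_le_two

theorem odd_card_degreeTwo (hodd : Odd n) (i : Fin n) : Odd #(S.degreeTwo i) := by
  have hcompl : ({v | Odd ((S.orth i).degree v)} : Finset _) = (S.degreeTwo i)ᶜ := by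
    ext v
    have := S.degree_pos i v
    have := S.degree_le_two i v
    simp only [mem_filter, mem_univ, true_and, mem_compl, mem_degreeTwo]
    interval_cases (S.orth i).degree v <;> decide
  obtain ⟨k, hk⟩ := (S.orth i).even_card_odd_degree_vertices
  obtain ⟨l, rfl⟩ := hodd
  rw [hcompl, card_compl, Fintype.card_fin] at hk
  exact ⟨l + 1 - k, by have := card_le_univ (S.degreeTwo i); rw [Fintype.card_fin] at this; omega⟩

theorem exists_card_parClass_eq_two (hodd : Odd n) (j : Fin n) :
    ∃ c, #(S.parClass j c) = 2 := by
  obtain ⟨p, hp⟩ := card_pos.1 (S.odd_card_degreeTwo hodd j).pos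
  obtain ⟨c, hc⟩ := S.exists_adj j p
  exact ⟨c, degree_eq_card_parClass hc ▸ mem_degreeTwo.1 hp⟩

variable {S}

theorem card_degreeTwo_le_one_of_forall_par
    (h : ∀ x y, #(S.parClass i x) = 2 → #(S.parClass i y) = 2 → S.par i x y) :
    #(S.degreeTwo i) ≤ 1 := by
  refine card_le_one.2 fun q₁ hq₁ q₂ hq₂ => ?_
  by_contra hne
  rw [mem_degreeTwo] at hq₁ hq₂
  obtain ⟨y₁, hy₁⟩ := S.exists_adj i q₁
  obtain ⟨y₂, hy₂⟩ := S.exists_adj i q₂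
  have hy₁₂ := h y₂ y₁ (degree_eq_card_parClass hy₂ ▸ hq₂) (degree_eq_card_parClass hy₁ ▸ hq₁)
  -- `y₁` is orthogonal to both `q₁` and `q₂`, so the class of `q₁` has two elements
  have hq₁₂ : {q₁, q₂} ⊆ (S.orth i).neighborFinset y₁ := by
    simpa [insert_subset_iff] using ⟨hy₁.symm, (S.orth_of_orth_of_par hy₂ hy₁₂).symm⟩
  have hcls : #(S.parClass i q₁) = 2 := by
    have := card_le_card hq₁₂
    rw [card_pair hne, SimpleGraph.card_neighborFinset_eq_degree,
      degree_eq_card_parClass hy₁.symm] at this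
    exact le_antisymm card_parClass_le_two this
  exact (S.orth i).irrefl
    (S.orth_of_orth_of_par hy₁.symm (h q₁ y₁ hcls (degree_eq_card_parClass hy₁ ▸ hq₁)))

theorem even_card_degreeTwo (hb : #(S.parClass i b) = 2) (hb' : #(S.parClass i b') = 2)
    (hbb' : ¬ S.par i b b')
    (h : ∀ x, #(S.parClass i x) = 2 → S.par i x b ∨ S.par i x b') :
    Even #(S.degreeTwo i) := by
  -- a two-element class orthogonal to `c` is not the class of `c`, so it is the class of `c'`
  have hdeg : ∀ c c', #(S.parClass i c) = 2 →
      (∀ x, #(S.parClass i x) = 2 → S.par i x c ∨ S.par i x c') →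
      (S.orth i).degree c = 2 → (S.orth i).degree c' = 2 := fun c c' hc h' hdc => by
    obtain ⟨y, hy⟩ := S.exists_adj i c
    rcases h' y (degree_eq_card_parClass hy ▸ hdc) with hyc | hyc'
    · exact ((S.orth i).irrefl (S.orth_of_orth_of_par hy hyc)).elim
    · rw [degree_eq_card_parClass (S.orth_of_orth_of_par hy hyc').symm, hc]
  have hdeg_eq : (S.orth i).degree b = (S.orth i).degree b' := by
    have := hdeg b b' hb h
    have := hdeg b' b hb' fun x hx => (h x hx).symm
    have := S.degree_pos i b; have := S.degree_pos i b'
    have := S.degree_le_two i b; have := S.degree_le_two i b'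
    omega
  have hunion : S.degreeTwo i = (S.orth i).neighborFinset b ∪ (S.orth i).neighborFinset b' := by
    ext q
    simp only [mem_degreeTwo, mem_union, SimpleGraph.mem_neighborFinset]
    constructor
    · intro hq
      obtain ⟨y, hy⟩ := S.exists_adj i q
      exact (h y (degree_eq_card_parClass hy ▸ hq)).imp
        (fun hyb => (S.orth_of_orth_of_par hy hyb).symm)
        (fun hyb' => (S.orth_of_orth_of_par hy hyb').symm)
    · rintro (hq | hq)
      · rw [degree_eq_card_parClass hq.symm, hb]
      · rw [degree_eq_card_parClass hq.symm, hb']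
  have hdisj : Disjoint ((S.orth i).neighborFinset b) ((S.orth i).neighborFinset b') :=
    disjoint_left.2 fun q hq hq' => hbb' <| S.par_of_orth_of_orth
      ((SimpleGraph.mem_neighborFinset _ _ _).1 hq).symm
      ((SimpleGraph.mem_neighborFinset _ _ _).1 hq').symm
  rw [hunion, card_union_of_disjoint hdisj, SimpleGraph.card_neighborFinset_eq_degree,
    SimpleGraph.card_neighborFinset_eq_degree, hdeg_eq]
  exact ⟨_, rfl⟩

variable (S)

theorem card_degreeTwo_le_one (hn : 2 ≤ n) (hodd : Odd n) (i : Fin n) :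
    #(S.degreeTwo i) ≤ 1 := by
  by_contra hD
  refine Nat.not_even_iff_odd.2 (S.odd_card_degreeTwo hodd i) ?_
  obtain ⟨x, x', hx, hx', hxx'⟩ : ∃ x x', #(S.parClass i x) = 2 ∧ #(S.parClass i x') = 2 ∧
      ¬ S.par i x x' := by
    by_contra! h
    exact hD (card_degreeTwo_le_one_of_forall_par h)
  -- a two-element class at another qubit meets the classes of `x` and `x'`, hence is a pair
  -- `{b, b'}` through both, and it meets every two-element class at `i`
  have : Nontrivial (Fin n) := Fin.nontrivial_iff_two_le.2 hn
  obtain ⟨j, hji⟩ := exists_ne i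
  obtain ⟨c, hc⟩ := S.exists_card_parClass_eq_two hodd j
  obtain ⟨b, hb⟩ := parClass_inter_nonempty hji.symm hx hc
  obtain ⟨b', hb'⟩ := parClass_inter_nonempty hji.symm hx' hc
  simp only [mem_inter, mem_parClass] at hb hb'
  have hbb' : ¬ S.par i b b' := fun h =>
    hxx' ((S.par_equiv i).trans ((S.par_equiv i).trans hb.1 h) ((S.par_equiv i).symm hb'.1))
  have hB : S.parClass j c = {b, b'} := by
    refine (eq_of_subset_of_card_le ?_ ?_).symm
    · simpa [insert_subset_iff] using ⟨hb.2, hb'.2⟩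
    · rw [hc, card_pair]
      rintro rfl
      exact hbb' ((S.par_equiv i).refl b)
  refine even_card_degreeTwo (parClass_eq_of_par hb.1 ▸ hx) (parClass_eq_of_par hb'.1 ▸ hx')
    hbb' fun z hz => ?_
  obtain ⟨w, hw⟩ := parClass_inter_nonempty hji.symm hz hc
  rw [hB, mem_inter, mem_insert, mem_singleton, mem_parClass] at hw
  obtain ⟨hzw, rfl | rfl⟩ := hw
  exacts [Or.inl hzw, Or.inr hzw]

theorem sum_degree_le (hn : 2 ≤ n) (hodd : Odd n) (i : Fin n) :
    ∑ p, (S.orth i).degree p ≤ n + 3 := by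
  calc ∑ p, (S.orth i).degree p ≤ ∑ p, (1 + if p ∈ S.degreeTwo i then 1 else 0) :=
        sum_le_sum fun p _ => by
          have := S.degree_le_two i p
          split_ifs with hp <;> rw [mem_degreeTwo] at * <;> omega
    _ = n + 2 + #(S.degreeTwo i) := by simp [sum_add_distrib, degreeTwo]
    _ ≤ n + 3 := by have := S.card_degreeTwo_le_one hn hodd i; omega

end SizeAddTwo

theorem isEmpty_of_odd {n : ℕ} (hn : 2 ≤ n) (hodd : Odd n) :
    IsEmpty (UnextendibleConfig n (n + 2)) := by
  refine ⟨fun S => ?_⟩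
  have lower : (n + 2) * (n + 1) ≤ ∑ i, ∑ p, (S.orth i).degree p := by
    rw [sum_comm]
    simpa using sum_le_sum fun p (_ : p ∈ univ) => S.sub_one_le_sum_degree p
  have upper : ∑ i, ∑ p, (S.orth i).degree p ≤ n * (n + 3) := by
    simpa using sum_le_sum fun i (_ : i ∈ univ) => S.sum_degree_le hn hodd i
  nlinarith

def ofNotExtendible {n m : ℕ} {V : Fin m → Fin n → EuclideanSpace ℂ (Fin 2)}
    (hV : PairwiseOrthProdFamily V) (hext : ¬ Extendible V) : UnextendibleConfig n m where
  par i p q := ℂ ∙ V p i = ℂ ∙ V q i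
  par_equiv _ := ⟨fun _ => rfl, Eq.symm, Eq.trans⟩
  orth i :=
    { Adj p q := ⟪V p i, V q i⟫_ℂ = 0
      symm := ⟨fun _ _ => inner_eq_zero_symm.1⟩
      loopless := ⟨fun p h => hV.1 p i (inner_self_eq_zero.1 h)⟩ }
  orth_of_orth_of_par h hpar := inner_eq_zero_of_span_singleton_eq hpar h
  par_of_orth_of_orth h h' :=
    span_singleton_eq_of_inner_eq_zero (finrank_euclideanSpace_fin (𝕜 := ℂ)) (hV.1 _ _)
      (hV.1 _ _) (hV.1 _ _) h h'
  exists_orth := hV.2 _ _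
  not_covered f := by
    choose w hw0 hw using fun i =>
      exists_ne_zero_inner_eq_zero_s13 (finrank_euclideanSpace_fin (𝕜 := ℂ)).ge (hV.1 (f i) i)
    by_contra! hcov
    exact hext ⟨w, hw0, fun p =>
      (hcov p).imp fun i hpar => inner_eq_zero_of_span_singleton_eq hpar (hw i)⟩

end UnextendibleConfig

/-- for odd `n ≥ 3`, there is no `n`-qubit UPB of size `n + 2`. -/
theorem no_upb_size_add_two_of_odd (n : ℕ) (hn : 3 ≤ n) (hodd : Odd n)
    (V : Fin (n + 2) → Fin n → EuclideanSpace ℂ (Fin 2))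
    (hV : PairwiseOrthProdFamily V) :
    Extendible V := by
  by_contra hext
  exact (UnextendibleConfig.isEmpty_of_odd (by omega) hodd).false
    (UnextendibleConfig.ofNotExtendible hV hext)
end
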